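/- Let (H₋, H₊, Γ₋, Γ₊) be a boundary quadruple for a densely defined skew-symmetric operator A₀ on a Hilbert space V, with A = (−A₀)*. Let H̃₋, H̃₊ be Hilbert spaces and Γ̃₋: D(A) → H̃₋, Γ̃₊: D(A) → H̃₊ be linear. Then (H̃₋, H̃₊, Γ̃₋, Γ̃₊) is a boundary quadruple for A₀ if and only if: (a) Γ̃₋D(A) = H̃₋ and Γ̃₊D(A) = H̃₊, and (b) there exists a bounded invertible linear operator Ψ: H₋ ⊕ H₊ → H̃₋ ⊕ H̃₊ such that Ψ(Γ₋u, Γ₊u) = (Γ̃₋u, Γ̃₊u) for all u ∈ D(A) and Ψ* C̃ Ψ = C, where C(x₋, x₊) = (−x₋, x₊) on H₋ ⊕ H₊ and C̃(x̃₋, x̃₊) = (−x̃₋, x̃₊) on H̃₋ ⊕ H̃₊. -/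

import Mathlib

variable {𝕜 V : Type*} [RCLike 𝕜] [NormedAddCommGroup V] [InnerProductSpace 𝕜 V]
  [CompleteSpace V]

/-- An operator `A` on `V` is *skew-symmetric* if `⟪Au, v⟫ + ⟪u, Av⟫ = 0` for all
`u, v ∈ D(A)`. -/
def SkewSymmetric (A : V →ₗ.[𝕜] V) : Prop :=
  ∀ u v : A.domain, @inner 𝕜 _ _ (A u) (v : V) + @inner 𝕜 _ _ (u : V) (A v) = 0

/-- A *boundary quadruple* `(H₋, H₊, Γ₋, Γ₊)` for a densely defined skew-symmetric operator
`A₀` (here expressed via `A := (-A₀)*`) consists of pre-Hilbert spaces `H₋, H₊` and surjective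
linear maps `Γ₋ : D(A) → H₋`, `Γ₊ : D(A) → H₊` such that
`⟪Au, v⟫ + ⟪u, Av⟫ = ⟪Γ₊u, Γ₊v⟫ - ⟪Γ₋u, Γ₋v⟫` for all `u, v ∈ D(A)` and
`ker Γ₋ + ker Γ₊ = D(A)`. -/
def IsBoundaryQuadruple (A : V →ₗ.[𝕜] V) {Hm Hp : Type*}
    [NormedAddCommGroup Hm] [InnerProductSpace 𝕜 Hm]
    [NormedAddCommGroup Hp] [InnerProductSpace 𝕜 Hp]
    (Γm : A.domain →ₗ[𝕜] Hm) (Γp : A.domain →ₗ[𝕜] Hp) : Prop :=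
  Function.Surjective Γm ∧ Function.Surjective Γp ∧
    (∀ u v : A.domain,
      @inner 𝕜 _ _ (A u) (v : V) + @inner 𝕜 _ _ (u : V) (A v) =
        @inner 𝕜 _ _ (Γp u) (Γp v) - @inner 𝕜 _ _ (Γm u) (Γm v)) ∧
    LinearMap.ker Γm ⊔ LinearMap.ker Γp = ⊤

/-- The operator `C(x₋, x₊) = (-x₋, x₊)` on the Hilbert direct sum `H₋ ⊕ H₊`. -/
noncomputable def flipFst (𝕜 α β : Type*) [RCLike 𝕜]
    [NormedAddCommGroup α] [InnerProductSpace 𝕜 α]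
    [NormedAddCommGroup β] [InnerProductSpace 𝕜 β] :
    WithLp 2 (α × β) →ₗ[𝕜] WithLp 2 (α × β) :=
  (WithLp.linearEquiv 2 𝕜 (α × β)).symm.toLinearMap ∘ₗ
    (LinearMap.prodMap (-LinearMap.id) LinearMap.id) ∘ₗ
    (WithLp.linearEquiv 2 𝕜 (α × β)).toLinearMap


set_option linter.unusedSectionVars false
set_option maxHeartbeats 1600000

open scoped InnerProductSpace

local notation "⟪" x ", " y "⟫" => @inner 𝕜 _ _ x y

section FlipFst
variable {α β : Type*} [NormedAddCommGroup α] [InnerProductSpace 𝕜 α]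
    [NormedAddCommGroup β] [InnerProductSpace 𝕜 β]

lemma flipFst_fst (x : WithLp 2 (α × β)) : (flipFst 𝕜 α β x).fst = -x.fst := rfl
lemma flipFst_snd (x : WithLp 2 (α × β)) : (flipFst 𝕜 α β x).snd = x.snd := rfl

lemma inner_flipFst_left (x y : WithLp 2 (α × β)) :
    @inner 𝕜 _ _ (flipFst 𝕜 α β x) y = @inner 𝕜 _ _ x.snd y.snd - @inner 𝕜 _ _ x.fst y.fst := by
  rw [WithLp.prod_inner_apply]; simp only [WithLp.ofLp_fst, WithLp.ofLp_snd]
  rw [flipFst_fst, flipFst_snd, inner_neg_left]; ring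

lemma inner_flipFst_symm (x y : WithLp 2 (α × β)) :
    @inner 𝕜 _ _ (flipFst 𝕜 α β x) y = @inner 𝕜 _ _ x (flipFst 𝕜 α β y) := by
  rw [inner_flipFst_left, WithLp.prod_inner_apply]; simp only [WithLp.ofLp_fst, WithLp.ofLp_snd]
  rw [flipFst_fst, flipFst_snd, inner_neg_right]; ring

lemma norm_flipFst (x : WithLp 2 (α × β)) : ‖flipFst 𝕜 α β x‖ = ‖x‖ := by
  have h := WithLp.prod_norm_eq_of_L2 (flipFst 𝕜 α β x)
  rw [flipFst_fst, flipFst_snd, norm_neg] at h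
  rw [h, WithLp.prod_norm_eq_of_L2 x]

end FlipFst

namespace BQAux


variable (𝕜) in
/-- The graph of `(-A₀).adjoint`, described by the adjoint relation, as a submodule of
the Hilbert space `WithLp 2 (V × V)`. -/
def graphSub (A₀ : V →ₗ.[𝕜] V) : Submodule 𝕜 (WithLp 2 (V × V)) where
  carrier := {p | ∀ x : A₀.domain, ⟪p.snd, (x : V)⟫ = ⟪p.fst, -(A₀ x)⟫}
  zero_mem' := by intro x; simp
  add_mem' := by
    intro p q hp hq x
    have h1 := hp x; have h2 := hq x
    simp only [WithLp.add_fst, WithLp.add_snd, inner_add_left] at *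
    rw [h1, h2]
  smul_mem' := by
    intro c p hp x
    have h1 := hp x
    simp only [WithLp.smul_fst, WithLp.smul_snd, inner_smul_left] at *
    rw [h1]

lemma mem_graphSub {A₀ : V →ₗ.[𝕜] V} {p : WithLp 2 (V × V)} :
    p ∈ graphSub 𝕜 A₀ ↔ ∀ x : A₀.domain, ⟪p.snd, (x : V)⟫ = ⟪p.fst, -(A₀ x)⟫ := Iff.rfl

include 𝕜 in
lemma continuous_withLpFst : Continuous fun p : WithLp 2 (V × V) => p.fst :=
  continuous_fst.comp (WithLp.prodContinuousLinearEquiv 2 𝕜 V V).continuous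

include 𝕜 in
lemma continuous_withLpSnd : Continuous fun p : WithLp 2 (V × V) => p.snd :=
  continuous_snd.comp (WithLp.prodContinuousLinearEquiv 2 𝕜 V V).continuous

lemma isClosed_graphSub (A₀ : V →ₗ.[𝕜] V) :
    IsClosed ((graphSub 𝕜 A₀ : Submodule 𝕜 _) : Set (WithLp 2 (V × V))) := by
  have : ((graphSub 𝕜 A₀ : Submodule 𝕜 _) : Set (WithLp 2 (V × V))) =
      ⋂ x : A₀.domain, {p : WithLp 2 (V × V) | ⟪p.snd, (x : V)⟫ = ⟪p.fst, -(A₀ x)⟫} := by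
    ext p; simp [mem_graphSub, Set.mem_iInter, Set.mem_setOf_eq]
  rw [this]
  exact isClosed_iInter fun x => isClosed_eq
    ((continuous_withLpSnd (V := V) (𝕜 := 𝕜)).inner continuous_const)
    ((continuous_withLpFst (V := V) (𝕜 := 𝕜)).inner continuous_const)

section WithA

variable {A₀ : V →ₗ.[𝕜] V}

/-- Recognizing elements of the adjoint's domain. -/
lemma mem_A_of (hdense : Dense (A₀.domain : Set V)) {y w : V}
    (h : ∀ x : A₀.domain, ⟪w, (x : V)⟫ = ⟪y, -(A₀ x)⟫) :
    ∃ hy : y ∈ ((-A₀).adjoint).domain, (-A₀).adjoint ⟨y, hy⟩ = w := by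
  have hdense' : Dense (((-A₀).domain : Submodule 𝕜 V) : Set V) := hdense
  have hy : y ∈ ((-A₀).adjoint).domain := by
    refine LinearPMap.mem_adjoint_domain_of_exists y ⟨w, fun x => ?_⟩
    rw [LinearPMap.neg_apply]
    exact h x
  refine ⟨hy, LinearPMap.adjoint_apply_eq hdense' ⟨y, hy⟩ fun x => ?_⟩
  rw [LinearPMap.neg_apply]
  exact h x

/-- The fundamental adjoint relation. -/
lemma A_formal (hdense : Dense (A₀.domain : Set V)) (v : ((-A₀).adjoint).domain)
    (x : A₀.domain) : ⟪(-A₀).adjoint v, (x : V)⟫ = ⟪(v : V), -(A₀ x)⟫ := by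
  have hdense' : Dense (((-A₀).domain : Submodule 𝕜 V) : Set V) := hdense
  have := LinearPMap.adjoint_isFormalAdjoint hdense' v x
  rwa [LinearPMap.neg_apply] at this

lemma graphSub_spec (hdense : Dense (A₀.domain : Set V)) (p : graphSub 𝕜 A₀) :
    ∃ hy : (p : WithLp 2 (V × V)).fst ∈ ((-A₀).adjoint).domain,
      (-A₀).adjoint ⟨(p : WithLp 2 (V × V)).fst, hy⟩ = (p : WithLp 2 (V × V)).snd :=
  mem_A_of hdense p.2

lemma mem_graphSub_of (v : ((-A₀).adjoint).domain) (hdense : Dense (A₀.domain : Set V)) :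
    (WithLp.equiv 2 (V × V)).symm ((v : V), (-A₀).adjoint v) ∈ graphSub 𝕜 A₀ := by
  intro x
  rw [WithLp.equiv_symm_apply, WithLp.toLp_fst, WithLp.toLp_snd]
  exact A_formal hdense v x

end WithA

section WithA2

variable {A₀ : V →ₗ.[𝕜] V} (hdense : Dense (A₀.domain : Set V))

/-- The projection from the graph space back to the domain of the adjoint. -/
noncomputable def ofG (hdense : Dense (A₀.domain : Set V)) :
    ↥(graphSub 𝕜 A₀) →ₗ[𝕜] ↥((-A₀).adjoint).domain :=
  LinearMap.codRestrict ((-A₀).adjoint).domain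
    (((LinearMap.fst 𝕜 V V).comp (WithLp.linearEquiv 2 𝕜 (V × V)).toLinearMap).comp
      (graphSub 𝕜 A₀).subtype)
    fun p => (graphSub_spec hdense p).1

@[simp] lemma ofG_coe (p : graphSub 𝕜 A₀) :
    ((ofG hdense p : ↥((-A₀).adjoint).domain) : V) = (p : WithLp 2 (V × V)).fst := rfl

lemma A_ofG (p : graphSub 𝕜 A₀) :
    (-A₀).adjoint (ofG hdense p) = (p : WithLp 2 (V × V)).snd := by
  have h := (graphSub_spec hdense p).2
  convert h using 2
  rfl

/-- The inclusion of the domain of the adjoint into the graph space. -/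
noncomputable def toG (hdense : Dense (A₀.domain : Set V)) :
    ↥((-A₀).adjoint).domain →ₗ[𝕜] ↥(graphSub 𝕜 A₀) :=
  LinearMap.codRestrict (graphSub 𝕜 A₀)
    ((WithLp.linearEquiv 2 𝕜 (V × V)).symm.toLinearMap.comp
      ((((-A₀).adjoint).domain.subtype).prod ((-A₀).adjoint).toFun))
    fun v => mem_graphSub_of v hdense

@[simp] lemma toG_coe_fst (v : ↥((-A₀).adjoint).domain) :
    ((toG hdense v : graphSub 𝕜 A₀) : WithLp 2 (V × V)).fst = (v : V) := rfl

@[simp] lemma toG_coe_snd (v : ↥((-A₀).adjoint).domain) :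
    ((toG hdense v : graphSub 𝕜 A₀) : WithLp 2 (V × V)).snd = (-A₀).adjoint v := rfl

lemma ofG_toG (v : ↥((-A₀).adjoint).domain) : ofG hdense (toG hdense v) = v := by
  apply Subtype.ext
  rfl

end WithA2
section Quadruple

variable {Hm Hp : Type*} [NormedAddCommGroup Hm] [InnerProductSpace 𝕜 Hm]
  [NormedAddCommGroup Hp] [InnerProductSpace 𝕜 Hp]

lemma surjective_prod_of {M : Type*} [AddCommGroup M] [Module 𝕜 M]
    (Γm : M →ₗ[𝕜] Hm) (Γp : M →ₗ[𝕜] Hp) (hm : Function.Surjective Γm)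
    (hp : Function.Surjective Γp) (hker : LinearMap.ker Γm ⊔ LinearMap.ker Γp = ⊤) :
    Function.Surjective (Γm.prod Γp) := by
  intro ⟨x, y⟩
  obtain ⟨u, hu⟩ := hm x
  obtain ⟨v, hv⟩ := hp y
  have hmem : ∀ w : M, w ∈ LinearMap.ker Γm ⊔ LinearMap.ker Γp := fun w => by
    rw [hker]; trivial
  obtain ⟨a, ha, b, hb, hab⟩ := Submodule.mem_sup.mp (hmem u)
  obtain ⟨c, hc, d, hd, hcd⟩ := Submodule.mem_sup.mp (hmem v)
  refine ⟨b + c, ?_⟩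
  have hΓma : Γm a = 0 := ha
  have hΓpb : Γp b = 0 := hb
  have hΓmc : Γm c = 0 := hc
  have hΓpd : Γp d = 0 := hd
  have h1 : Γm b = x := by
    have := congrArg Γm hab; rw [map_add, hΓma, zero_add] at this; rw [this, hu]
  have h2 : Γp c = y := by
    have := congrArg Γp hcd; rw [map_add, hΓpd, add_zero] at this; rw [this, hv]
  simp [LinearMap.prod_apply, h1, h2, hΓpb, hΓmc, Prod.ext_iff]

lemma ker_sup_of_surjective_prod {M : Type*} [AddCommGroup M] [Module 𝕜 M]
    (Γm : M →ₗ[𝕜] Hm) (Γp : M →ₗ[𝕜] Hp) (h : Function.Surjective (Γm.prod Γp)) :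
    LinearMap.ker Γm ⊔ LinearMap.ker Γp = ⊤ := by
  rw [eq_top_iff]
  intro u _
  obtain ⟨w, hw⟩ := h (Γm u, 0)
  have hw1 : Γm w = Γm u := congrArg Prod.fst hw
  have hw2 : Γp w = 0 := congrArg Prod.snd hw
  refine Submodule.mem_sup.mpr ⟨u - w, ?_, w, hw2, by abel⟩
  simp [LinearMap.mem_ker, map_sub, hw1]

variable {A₀ : V →ₗ.[𝕜] V}
variable (Γm : ↥((-A₀).adjoint).domain →ₗ[𝕜] Hm) (Γp : ↥((-A₀).adjoint).domain →ₗ[𝕜] Hp)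

/-- The joint boundary map into the ℓ²-sum. -/
noncomputable def jointMap : ↥((-A₀).adjoint).domain →ₗ[𝕜] WithLp 2 (Hm × Hp) :=
  (WithLp.linearEquiv 2 𝕜 (Hm × Hp)).symm.toLinearMap.comp (Γm.prod Γp)

@[simp] lemma jointMap_fst (u : ↥((-A₀).adjoint).domain) : (jointMap Γm Γp u).fst = Γm u := rfl
@[simp] lemma jointMap_snd (u : ↥((-A₀).adjoint).domain) : (jointMap Γm Γp u).snd = Γp u := rfl

lemma jointMap_apply (u : ↥((-A₀).adjoint).domain) :
    jointMap Γm Γp u = (WithLp.linearEquiv 2 𝕜 (Hm × Hp)).symm (Γm u, Γp u) := rfl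

variable {Γm Γp}

lemma jointMap_surjective (hq : IsBoundaryQuadruple (-A₀).adjoint Γm Γp) :
    Function.Surjective (jointMap Γm Γp) := by
  obtain ⟨hm, hp, -, hker⟩ := hq
  exact (WithLp.linearEquiv 2 𝕜 (Hm × Hp)).symm.surjective.comp
    (surjective_prod_of Γm Γp hm hp hker)

/-- Green's identity in terms of the joint boundary map. -/
lemma green (hq : IsBoundaryQuadruple (-A₀).adjoint Γm Γp) (u v : ↥((-A₀).adjoint).domain) :
    ⟪(-A₀).adjoint u, (v : V)⟫ + ⟪(u : V), (-A₀).adjoint v⟫ =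
      ⟪flipFst 𝕜 Hm Hp (jointMap Γm Γp u), jointMap Γm Γp v⟫ := by
  rw [inner_flipFst_left, jointMap_fst, jointMap_snd, jointMap_fst, jointMap_snd, hq.2.2.1]

/-- Characterization of the kernel of the joint boundary map. -/
lemma jointMap_eq_zero_iff (hq : IsBoundaryQuadruple (-A₀).adjoint Γm Γp)
    (u : ↥((-A₀).adjoint).domain) :
    jointMap Γm Γp u = 0 ↔
      ∀ v : ↥((-A₀).adjoint).domain,
        ⟪(-A₀).adjoint u, (v : V)⟫ + ⟪(u : V), (-A₀).adjoint v⟫ = 0 := by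
  constructor
  · intro h v
    rw [green hq u v, h]
    simp
  · intro h
    obtain ⟨v, hv⟩ := jointMap_surjective hq
      ((WithLp.linearEquiv 2 𝕜 (Hm × Hp)).symm (-(Γm u), Γp u))
    have h1 := (green hq u v).symm.trans (h v)
    have hvf : (jointMap Γm Γp v).fst = -(Γm u) := by
      rw [hv, WithLp.coe_symm_linearEquiv, WithLp.toLp_fst]
    have hvs : (jointMap Γm Γp v).snd = Γp u := by
      rw [hv, WithLp.coe_symm_linearEquiv, WithLp.toLp_snd]
    rw [inner_flipFst_left, jointMap_fst, jointMap_snd, hvf, hvs, inner_neg_right,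
      sub_neg_eq_add] at h1
    have h2 : (‖Γp u‖ : 𝕜) ^ 2 + (‖Γm u‖ : 𝕜) ^ 2 = 0 := by
      rw [← inner_self_eq_norm_sq_to_K, ← inner_self_eq_norm_sq_to_K]; exact h1
    have h3 : (‖Γp u‖ ^ 2 + ‖Γm u‖ ^ 2 : ℝ) = 0 := by exact_mod_cast h2
    have hp0 : Γp u = 0 := by
      have : ‖Γp u‖ = 0 := by nlinarith [sq_nonneg ‖Γp u‖, sq_nonneg ‖Γm u‖, norm_nonneg (Γp u), norm_nonneg (Γm u)]
      simpa using this
    have hm0 : Γm u = 0 := by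
      have : ‖Γm u‖ = 0 := by nlinarith [sq_nonneg ‖Γp u‖, sq_nonneg ‖Γm u‖, norm_nonneg (Γp u), norm_nonneg (Γm u)]
      simpa using this
    have : jointMap Γm Γp u = (WithLp.linearEquiv 2 𝕜 (Hm × Hp)).symm (0, 0) := by
      rw [jointMap_apply, hm0, hp0]
    exact this

end Quadruple
section BS

variable {Hm Hp : Type*} [NormedAddCommGroup Hm] [InnerProductSpace 𝕜 Hm]
  [NormedAddCommGroup Hp] [InnerProductSpace 𝕜 Hp]
variable {A₀ : V →ₗ.[𝕜] V}
variable {Γm : ↥((-A₀).adjoint).domain →ₗ[𝕜] Hm} {Γp : ↥((-A₀).adjoint).domain →ₗ[𝕜] Hp}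

variable (𝕜 A₀) in
/-- First coordinate of the graph space, as a continuous linear map. -/
noncomputable def fstL : ↥(graphSub 𝕜 A₀) →L[𝕜] V :=
  (ContinuousLinearMap.fst 𝕜 V V).comp
    ((WithLp.prodContinuousLinearEquiv 2 𝕜 V V).toContinuousLinearMap.comp
      (graphSub 𝕜 A₀).subtypeL)

variable (𝕜 A₀) in
/-- Second coordinate of the graph space, as a continuous linear map. -/
noncomputable def sndL : ↥(graphSub 𝕜 A₀) →L[𝕜] V :=
  (ContinuousLinearMap.snd 𝕜 V V).comp
    ((WithLp.prodContinuousLinearEquiv 2 𝕜 V V).toContinuousLinearMap.comp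
      (graphSub 𝕜 A₀).subtypeL)

@[simp] lemma fstL_apply (p : ↥(graphSub 𝕜 A₀)) :
    fstL 𝕜 A₀ p = (p : WithLp 2 (V × V)).fst := rfl
@[simp] lemma sndL_apply (p : ↥(graphSub 𝕜 A₀)) :
    sndL 𝕜 A₀ p = (p : WithLp 2 (V × V)).snd := rfl

variable (𝕜 A₀) in
/-- The pairing functional `p ↦ ⟪Av, p.fst⟫ + ⟪v, p.snd⟫` on the graph space. -/
noncomputable def pairL (v : ↥((-A₀).adjoint).domain) : ↥(graphSub 𝕜 A₀) →L[𝕜] 𝕜 :=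
  (innerSL 𝕜 ((-A₀).adjoint v)).comp (fstL 𝕜 A₀) + (innerSL 𝕜 (v : V)).comp (sndL 𝕜 A₀)

lemma pairL_apply (v : ↥((-A₀).adjoint).domain) (p : ↥(graphSub 𝕜 A₀)) :
    pairL 𝕜 A₀ v p = ⟪(-A₀).adjoint v, (p : WithLp 2 (V × V)).fst⟫ +
      ⟪(v : V), (p : WithLp 2 (V × V)).snd⟫ := rfl

lemma pairL_eq (hdense : Dense (A₀.domain : Set V))
    (hq : IsBoundaryQuadruple (-A₀).adjoint Γm Γp)
    (v : ↥((-A₀).adjoint).domain) (p : ↥(graphSub 𝕜 A₀)) :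
    pairL 𝕜 A₀ v p = ⟪Γp v, Γp (ofG hdense p)⟫ - ⟪Γm v, Γm (ofG hdense p)⟫ := by
  rw [pairL_apply, ← ofG_coe hdense p, ← A_ofG hdense p, hq.2.2.1]

/-- statement of the graph-norm boundedness of the joint boundary map. -/
lemma exists_jointMap_bound (hdense : Dense (A₀.domain : Set V))
    (hq : IsBoundaryQuadruple (-A₀).adjoint Γm Γp) :
    ∃ C : ℝ, 0 ≤ C ∧ ∀ p : ↥(graphSub 𝕜 A₀),
      ‖jointMap Γm Γp (ofG hdense p)‖ ≤ C * ‖p‖ := by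
  haveI : CompleteSpace ↥(graphSub 𝕜 A₀) := (isClosed_graphSub A₀).completeSpace_coe
  -- bound on `Γp`
  obtain ⟨Cp, hCp0, hCp⟩ : ∃ C : ℝ, 0 ≤ C ∧ ∀ p : ↥(graphSub 𝕜 A₀),
      ‖Γp (ofG hdense p)‖ ≤ C * ‖p‖ := by
    set ι := {v : ↥((-A₀).adjoint).domain // Γm v = 0 ∧ ‖Γp v‖ ≤ 1} with hι
    obtain ⟨C', hC'⟩ := banach_steinhaus (g := fun i : ι => pairL 𝕜 A₀ i.1)
      (fun p => ⟨‖Γp (ofG hdense p)‖, fun i => by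
        rw [pairL_eq hdense hq, i.2.1, inner_zero_left, sub_zero]
        calc ‖⟪Γp i.1, Γp (ofG hdense p)⟫‖ ≤ ‖Γp i.1‖ * ‖Γp (ofG hdense p)‖ :=
              norm_inner_le_norm _ _
          _ ≤ 1 * ‖Γp (ofG hdense p)‖ := by
              exact mul_le_mul_of_nonneg_right i.2.2 (norm_nonneg _)
          _ = ‖Γp (ofG hdense p)‖ := one_mul _⟩)
    refine ⟨max C' 0, le_max_right _ _, fun p => ?_⟩
    by_cases h0 : Γp (ofG hdense p) = 0
    · rw [h0, norm_zero]
      positivity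
    · set x := Γp (ofG hdense p) with hx
      obtain ⟨v, hv⟩ := jointMap_surjective hq
        ((WithLp.linearEquiv 2 𝕜 (Hm × Hp)).symm (0, (‖x‖ : 𝕜)⁻¹ • x))
      have hvm : Γm v = 0 := by
        have : (jointMap Γm Γp v).fst = 0 := by
          rw [hv, WithLp.coe_symm_linearEquiv, WithLp.toLp_fst]
        rwa [jointMap_fst] at this
      have hvp : Γp v = (‖x‖ : 𝕜)⁻¹ • x := by
        have : (jointMap Γm Γp v).snd = (‖x‖ : 𝕜)⁻¹ • x := by
          rw [hv, WithLp.coe_symm_linearEquiv, WithLp.toLp_snd]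
        rwa [jointMap_snd] at this
      have hxne : (‖x‖ : ℝ) ≠ 0 := norm_ne_zero_iff.mpr h0
      have hnv : ‖Γp v‖ ≤ 1 := by
        rw [hvp, norm_smul]
        simp only [norm_inv, RCLike.norm_ofReal, abs_norm]
        rw [inv_mul_cancel₀ hxne]
      have hval : pairL 𝕜 A₀ v p = (‖x‖ : 𝕜) := by
        rw [pairL_eq hdense hq, hvm, inner_zero_left, sub_zero, hvp, inner_smul_left,
          ← hx, inner_self_eq_norm_sq_to_K]
        rw [map_inv₀, RCLike.conj_ofReal]
        have hknz : (‖x‖ : 𝕜) ≠ 0 := RCLike.ofReal_ne_zero.mpr hxne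
        field_simp
      have := hC' ⟨v, hvm, hnv⟩
      calc ‖x‖ = ‖pairL 𝕜 A₀ v p‖ := by rw [hval, RCLike.norm_ofReal, abs_norm]
        _ ≤ ‖pairL 𝕜 A₀ v‖ * ‖p‖ := (pairL 𝕜 A₀ v).le_opNorm p
        _ ≤ max C' 0 * ‖p‖ := by
            exact mul_le_mul_of_nonneg_right (le_trans this (le_max_left _ _)) (norm_nonneg _)
  -- bound on `Γm`
  obtain ⟨Cm, hCm0, hCm⟩ : ∃ C : ℝ, 0 ≤ C ∧ ∀ p : ↥(graphSub 𝕜 A₀),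
      ‖Γm (ofG hdense p)‖ ≤ C * ‖p‖ := by
    set ι := {v : ↥((-A₀).adjoint).domain // Γp v = 0 ∧ ‖Γm v‖ ≤ 1} with hι
    obtain ⟨C', hC'⟩ := banach_steinhaus (g := fun i : ι => pairL 𝕜 A₀ i.1)
      (fun p => ⟨‖Γm (ofG hdense p)‖, fun i => by
        rw [pairL_eq hdense hq, i.2.1, inner_zero_left, zero_sub, norm_neg]
        calc ‖⟪Γm i.1, Γm (ofG hdense p)⟫‖ ≤ ‖Γm i.1‖ * ‖Γm (ofG hdense p)‖ :=
              norm_inner_le_norm _ _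
          _ ≤ 1 * ‖Γm (ofG hdense p)‖ := by
              exact mul_le_mul_of_nonneg_right i.2.2 (norm_nonneg _)
          _ = ‖Γm (ofG hdense p)‖ := one_mul _⟩)
    refine ⟨max C' 0, le_max_right _ _, fun p => ?_⟩
    by_cases h0 : Γm (ofG hdense p) = 0
    · rw [h0, norm_zero]
      positivity
    · set x := Γm (ofG hdense p) with hx
      obtain ⟨v, hv⟩ := jointMap_surjective hq
        ((WithLp.linearEquiv 2 𝕜 (Hm × Hp)).symm ((‖x‖ : 𝕜)⁻¹ • x, 0))
      have hvp : Γp v = 0 := by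
        have : (jointMap Γm Γp v).snd = 0 := by
          rw [hv, WithLp.coe_symm_linearEquiv, WithLp.toLp_snd]
        rwa [jointMap_snd] at this
      have hvm : Γm v = (‖x‖ : 𝕜)⁻¹ • x := by
        have : (jointMap Γm Γp v).fst = (‖x‖ : 𝕜)⁻¹ • x := by
          rw [hv, WithLp.coe_symm_linearEquiv, WithLp.toLp_fst]
        rwa [jointMap_fst] at this
      have hxne : (‖x‖ : ℝ) ≠ 0 := norm_ne_zero_iff.mpr h0
      have hnv : ‖Γm v‖ ≤ 1 := by
        rw [hvm, norm_smul]
        simp only [norm_inv, RCLike.norm_ofReal, abs_norm]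
        rw [inv_mul_cancel₀ hxne]
      have hval : pairL 𝕜 A₀ v p = -(‖x‖ : 𝕜) := by
        rw [pairL_eq hdense hq, hvp, inner_zero_left, zero_sub, hvm, inner_smul_left,
          ← hx, inner_self_eq_norm_sq_to_K]
        rw [map_inv₀, RCLike.conj_ofReal]
        rw [neg_inj]
        have hknz : (‖x‖ : 𝕜) ≠ 0 := RCLike.ofReal_ne_zero.mpr hxne
        field_simp
      have := hC' ⟨v, hvp, hnv⟩
      calc ‖x‖ = ‖pairL 𝕜 A₀ v p‖ := by rw [hval, norm_neg, RCLike.norm_ofReal, abs_norm]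
        _ ≤ ‖pairL 𝕜 A₀ v‖ * ‖p‖ := (pairL 𝕜 A₀ v).le_opNorm p
        _ ≤ max C' 0 * ‖p‖ := by
            exact mul_le_mul_of_nonneg_right (le_trans this (le_max_left _ _)) (norm_nonneg _)
  refine ⟨Cm + Cp, by positivity, fun p => ?_⟩
  have h1 : ‖jointMap Γm Γp (ofG hdense p)‖ ≤
      ‖Γm (ofG hdense p)‖ + ‖Γp (ofG hdense p)‖ := by
    rw [WithLp.prod_norm_eq_of_L2, jointMap_fst, jointMap_snd]
    rw [show ‖Γm (ofG hdense p)‖ + ‖Γp (ofG hdense p)‖ =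
      Real.sqrt ((‖Γm (ofG hdense p)‖ + ‖Γp (ofG hdense p)‖) ^ 2) from
      (Real.sqrt_sq (by positivity)).symm]
    apply Real.sqrt_le_sqrt
    nlinarith [norm_nonneg (Γm (ofG hdense p)), norm_nonneg (Γp (ofG hdense p))]
  calc ‖jointMap Γm Γp (ofG hdense p)‖ ≤ ‖Γm (ofG hdense p)‖ + ‖Γp (ofG hdense p)‖ := h1
    _ ≤ Cm * ‖p‖ + Cp * ‖p‖ := add_le_add (hCm p) (hCp p)
    _ = (Cm + Cp) * ‖p‖ := by ring

end BS
section Complete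

variable {Hm Hp : Type*} [NormedAddCommGroup Hm] [InnerProductSpace 𝕜 Hm]
  [NormedAddCommGroup Hp] [InnerProductSpace 𝕜 Hp]
variable {A₀ : V →ₗ.[𝕜] V}
variable {Γm : ↥((-A₀).adjoint).domain →ₗ[𝕜] Hm} {Γp : ↥((-A₀).adjoint).domain →ₗ[𝕜] Hp}

lemma pair_conj_symm (u v : ↥((-A₀).adjoint).domain) :
    ⟪(-A₀).adjoint u, (v : V)⟫ + ⟪(u : V), (-A₀).adjoint v⟫ =
      (starRingEnd 𝕜) (⟪(-A₀).adjoint v, (u : V)⟫ + ⟪(v : V), (-A₀).adjoint u⟫) := by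
  rw [map_add, inner_conj_symm, inner_conj_symm]
  ring

theorem completeSpace_of_boundary_quadruple (hdense : Dense (A₀.domain : Set V))
    (hskew : SkewSymmetric A₀) (hq : IsBoundaryQuadruple (-A₀).adjoint Γm Γp) :
    CompleteSpace (WithLp 2 (Hm × Hp)) := by
  haveI : CompleteSpace ↥(graphSub 𝕜 A₀) := (isClosed_graphSub A₀).completeSpace_coe
  obtain ⟨CK, hCK0, hCK⟩ := exists_jointMap_bound hdense hq
  -- the radical subspace
  set R : Submodule 𝕜 ↥(graphSub 𝕜 A₀) :=
    ⨅ v : ↥((-A₀).adjoint).domain, LinearMap.ker (pairL 𝕜 A₀ v : _ →ₗ[𝕜] 𝕜) with hRdef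
  have hmemR : ∀ p : ↥(graphSub 𝕜 A₀), p ∈ R ↔ ∀ v, pairL 𝕜 A₀ v p = 0 := by
    intro p
    simp [hRdef, Submodule.mem_iInf, LinearMap.mem_ker]
  have hRclosed : IsClosed (R : Set ↥(graphSub 𝕜 A₀)) := by
    have : (R : Set ↥(graphSub 𝕜 A₀)) =
        ⋂ v : ↥((-A₀).adjoint).domain, (LinearMap.ker (pairL 𝕜 A₀ v : ↥(graphSub 𝕜 A₀) →ₗ[𝕜] 𝕜) : Set _) := by
      ext p
      simp [hmemR p, Set.mem_iInter, LinearMap.mem_ker]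
    rw [this]
    exact isClosed_iInter fun v => ContinuousLinearMap.isClosed_ker (pairL 𝕜 A₀ v)
  have hpairB : ∀ (v : ↥((-A₀).adjoint).domain) (p : ↥(graphSub 𝕜 A₀)),
      pairL 𝕜 A₀ v p = ⟪(-A₀).adjoint v, ((ofG hdense p : ↥((-A₀).adjoint).domain) : V)⟫ +
        ⟪(v : V), (-A₀).adjoint (ofG hdense p)⟫ := by
    intro v p
    rw [pairL_apply, ofG_coe, A_ofG]
  have hRΓ : ∀ p : ↥(graphSub 𝕜 A₀), p ∈ R ↔ jointMap Γm Γp (ofG hdense p) = 0 := by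
    intro p
    rw [hmemR, jointMap_eq_zero_iff hq]
    constructor
    · intro h v
      rw [pair_conj_symm, ← hpairB, h v, map_zero]
    · intro h v
      rw [hpairB, pair_conj_symm, h v, map_zero]
  -- elements of the graph of `A₀` lie in `R`
  have hA₀R : ∀ x : A₀.domain, ∃ r ∈ R,
      ((r : WithLp 2 (V × V)).fst = (x : V) ∧ (r : WithLp 2 (V × V)).snd = A₀ x) := by
    intro x
    obtain ⟨hu, hAu⟩ := mem_A_of hdense (y := (x : V)) (w := A₀ x)
      (fun z => by
        have h1 := hskew x z
        rw [inner_neg_right]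
        linear_combination h1)
    refine ⟨toG hdense ⟨(x : V), hu⟩, ?_, by simp, by simp [hAu]⟩
    rw [hmemR]
    intro v
    rw [pairL_apply, toG_coe_fst, toG_coe_snd, hAu]
    have h2 := A_formal hdense v x
    rw [show ((⟨(x : V), hu⟩ : ↥((-A₀).adjoint).domain) : V) = (x : V) from rfl, h2,
      inner_neg_right]
    ring
  haveI : CompleteSpace ↥R := hRclosed.completeSpace_coe
  set Np : Submodule 𝕜 ↥(graphSub 𝕜 A₀) := LinearMap.ker (sndL 𝕜 A₀ - fstL 𝕜 A₀ : _ →ₗ[𝕜] V) with hNp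
  set Nm : Submodule 𝕜 ↥(graphSub 𝕜 A₀) := LinearMap.ker (sndL 𝕜 A₀ + fstL 𝕜 A₀ : _ →ₗ[𝕜] V) with hNm
  have hNpmem : ∀ p : ↥(graphSub 𝕜 A₀), p ∈ Np ↔
      (p : WithLp 2 (V × V)).snd = (p : WithLp 2 (V × V)).fst := by
    intro p
    rw [hNp, LinearMap.mem_ker, ContinuousLinearMap.coe_coe, ContinuousLinearMap.coe_sub', Pi.sub_apply, sub_eq_zero,
      fstL_apply, sndL_apply]
  have hNmmem : ∀ p : ↥(graphSub 𝕜 A₀), p ∈ Nm ↔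
      (p : WithLp 2 (V × V)).snd = -(p : WithLp 2 (V × V)).fst := by
    intro p
    rw [hNm, LinearMap.mem_ker, ContinuousLinearMap.coe_coe, ContinuousLinearMap.coe_add', Pi.add_apply,
      fstL_apply, sndL_apply, add_eq_zero_iff_eq_neg]
  have hNpclosed : IsClosed (Np : Set ↥(graphSub 𝕜 A₀)) := ContinuousLinearMap.isClosed_ker (sndL 𝕜 A₀ - fstL 𝕜 A₀)
  have hNmclosed : IsClosed (Nm : Set ↥(graphSub 𝕜 A₀)) := ContinuousLinearMap.isClosed_ker (sndL 𝕜 A₀ + fstL 𝕜 A₀)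
  -- coordinate arithmetic on the graph space
  have hfst_add : ∀ p q : ↥(graphSub 𝕜 A₀),
      ((↑(p + q) : WithLp 2 (V × V))).fst = (p : WithLp 2 (V × V)).fst +
        (q : WithLp 2 (V × V)).fst := fun p q => rfl
  have hsnd_add : ∀ p q : ↥(graphSub 𝕜 A₀),
      ((↑(p + q) : WithLp 2 (V × V))).snd = (p : WithLp 2 (V × V)).snd +
        (q : WithLp 2 (V × V)).snd := fun p q => rfl
  have hfst_sub : ∀ p q : ↥(graphSub 𝕜 A₀),
      ((↑(p - q) : WithLp 2 (V × V))).fst = (p : WithLp 2 (V × V)).fst -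
        (q : WithLp 2 (V × V)).fst := fun p q => rfl
  have hsnd_sub : ∀ p q : ↥(graphSub 𝕜 A₀),
      ((↑(p - q) : WithLp 2 (V × V))).snd = (p : WithLp 2 (V × V)).snd -
        (q : WithLp 2 (V × V)).snd := fun p q => rfl
  -- splitting of the orthogonal complement
  have hsplit : ∀ w : ↥(graphSub 𝕜 A₀), w ∈ Rᗮ → ∃ a ∈ Np, ∃ b ∈ Nm, w = a + b := by
    intro w hw
    have hrev : ∃ hz : (w : WithLp 2 (V × V)).snd ∈ ((-A₀).adjoint).domain,
        (-A₀).adjoint ⟨(w : WithLp 2 (V × V)).snd, hz⟩ = (w : WithLp 2 (V × V)).fst := by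
      apply mem_A_of hdense
      intro x
      obtain ⟨r, hrR, hr1, hr2⟩ := hA₀R x
      have horth := (Submodule.mem_orthogonal R w).mp hw r hrR
      rw [Submodule.coe_inner, WithLp.prod_inner_apply, WithLp.ofLp_fst, WithLp.ofLp_fst,
        WithLp.ofLp_snd, WithLp.ofLp_snd, hr1, hr2] at horth
      have hconj := congrArg (starRingEnd 𝕜) horth
      rw [map_add, inner_conj_symm, inner_conj_symm, map_zero] at hconj
      rw [inner_neg_right]
      linear_combination hconj
    obtain ⟨hz, hAz⟩ := hrev
    set u : ↥((-A₀).adjoint).domain := ofG hdense w with hu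
    set z : ↥((-A₀).adjoint).domain := ⟨(w : WithLp 2 (V × V)).snd, hz⟩ with hzdef
    have hAu : (-A₀).adjoint u = (w : WithLp 2 (V × V)).snd := A_ofG hdense w
    have hucoe : (u : V) = (w : WithLp 2 (V × V)).fst := rfl
    have hzcoe : (z : V) = (w : WithLp 2 (V × V)).snd := rfl
    refine ⟨toG hdense ((2 : 𝕜)⁻¹ • (u + z)), ?_, toG hdense ((2 : 𝕜)⁻¹ • (u - z)), ?_, ?_⟩
    · rw [hNpmem, toG_coe_fst, toG_coe_snd]
      rw [LinearPMap.map_smul, LinearPMap.map_add, hAu, hAz]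
      push_cast
      simp only [hucoe, hzcoe]
      abel
    · rw [hNmmem, toG_coe_fst, toG_coe_snd]
      rw [LinearPMap.map_smul, LinearPMap.map_sub, hAu, hAz]
      push_cast
      simp only [hucoe, hzcoe]
      module
    · have h1 : ((toG hdense ((2 : 𝕜)⁻¹ • (u + z)) + toG hdense ((2 : 𝕜)⁻¹ • (u - z)) :
          ↥(graphSub 𝕜 A₀)) : WithLp 2 (V × V)).fst = (w : WithLp 2 (V × V)).fst := by
        rw [hfst_add, toG_coe_fst, toG_coe_fst]
        push_cast
        simp only [hucoe, hzcoe]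
        module
      have h2 : ((toG hdense ((2 : 𝕜)⁻¹ • (u + z)) + toG hdense ((2 : 𝕜)⁻¹ • (u - z)) :
          ↥(graphSub 𝕜 A₀)) : WithLp 2 (V × V)).snd = (w : WithLp 2 (V × V)).snd := by
        rw [hsnd_add, toG_coe_snd, toG_coe_snd, LinearPMap.map_smul, LinearPMap.map_add,
          LinearPMap.map_smul, LinearPMap.map_sub, hAu, hAz]
        module
      exact Subtype.ext ((WithLp.equiv 2 (V × V)).injective (Prod.ext h1.symm h2.symm))
  -- norms on Np and Nm
  have hnormsq : ∀ p : ↥(graphSub 𝕜 A₀), ‖p‖ ^ 2 =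
      ‖(p : WithLp 2 (V × V)).fst‖ ^ 2 + ‖(p : WithLp 2 (V × V)).snd‖ ^ 2 := fun p =>
    WithLp.prod_norm_sq_eq_of_L2 (p : WithLp 2 (V × V))
  -- orthogonality of Np and Nm
  have horthN : ∀ a b : ↥(graphSub 𝕜 A₀), a ∈ Np → b ∈ Nm → ⟪a, b⟫ = (0 : 𝕜) := by
    intro a b ha hb
    rw [Submodule.coe_inner, WithLp.prod_inner_apply, WithLp.ofLp_fst, WithLp.ofLp_fst,
      WithLp.ofLp_snd, WithLp.ofLp_snd, (hNpmem a).mp ha, (hNmmem b).mp hb,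
      inner_neg_right]
    ring
  -- the key antilipschitz estimate
  have hkey : ∀ a b : ↥(graphSub 𝕜 A₀), a ∈ Np → b ∈ Nm →
      Real.sqrt (‖a‖ ^ 2 + ‖b‖ ^ 2) ≤ CK * ‖jointMap Γm Γp (ofG hdense (a + b))‖ := by
    intro a b ha hb
    set S : ℝ := ‖a‖ ^ 2 + ‖b‖ ^ 2 with hS
    have hS0 : 0 ≤ S := by positivity
    set u : ↥((-A₀).adjoint).domain := ofG hdense (a + b) with hudef
    set v : ↥((-A₀).adjoint).domain := ofG hdense (a - b) with hvdef
    set fa := (a : WithLp 2 (V × V)).fst with hfa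
    set fb := (b : WithLp 2 (V × V)).fst with hfb
    have hsa : (a : WithLp 2 (V × V)).snd = fa := (hNpmem a).mp ha
    have hsb : (b : WithLp 2 (V × V)).snd = -fb := (hNmmem b).mp hb
    have hAu : (-A₀).adjoint u = fa - fb := by
      rw [hudef, A_ofG, hsnd_add, hsa, hsb]; abel
    have hvcoe : (v : V) = fa - fb := by
      rw [hvdef, ofG_coe, hfst_sub]
    have hAv : (-A₀).adjoint v = fa + fb := by
      rw [hvdef, A_ofG, hsnd_sub, hsa, hsb]; abel
    have hucoe : (u : V) = fa + fb := by
      rw [hudef, ofG_coe, hfst_add]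
    have hB : ⟪(-A₀).adjoint u, (v : V)⟫ + ⟪(u : V), (-A₀).adjoint v⟫ =
        ⟪fa - fb, fa - fb⟫ + ⟪fa + fb, fa + fb⟫ := by
      rw [hAu, hAv, hucoe, hvcoe]
    have hre : RCLike.re (⟪(-A₀).adjoint u, (v : V)⟫ + ⟪(u : V), (-A₀).adjoint v⟫) = S := by
      rw [hB, map_add, inner_self_eq_norm_sq, inner_self_eq_norm_sq]
      have hpar := parallelogram_law_with_norm 𝕜 fa fb
      have hna : ‖a‖ ^ 2 = 2 * ‖fa‖ ^ 2 := by
        rw [hnormsq a, hsa, ← hfa]; ring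
      have hnb : ‖b‖ ^ 2 = 2 * ‖fb‖ ^ 2 := by
        rw [hnormsq b, hsb, ← hfb, norm_neg]; ring
      rw [hS, hna, hnb]
      linarith [hpar]
    have hnormab : ‖a - b‖ = Real.sqrt S := by
      have h1 : ‖a - b‖ ^ 2 = S := by
        rw [norm_sub_sq (𝕜 := 𝕜), horthN a b ha hb, map_zero]
        ring
      rw [← h1, Real.sqrt_sq (norm_nonneg _)]
    have hbound : S ≤ ‖jointMap Γm Γp u‖ * (CK * Real.sqrt S) := by
      have h1 : S ≤ ‖⟪(-A₀).adjoint u, (v : V)⟫ + ⟪(u : V), (-A₀).adjoint v⟫‖ := by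
        rw [← hre]
        exact RCLike.re_le_norm _
      have h2 : ‖⟪(-A₀).adjoint u, (v : V)⟫ + ⟪(u : V), (-A₀).adjoint v⟫‖ ≤
          ‖jointMap Γm Γp u‖ * ‖jointMap Γm Γp v‖ := by
        rw [green hq u v]
        calc ‖⟪flipFst 𝕜 Hm Hp (jointMap Γm Γp u), jointMap Γm Γp v⟫‖ ≤
            ‖flipFst 𝕜 Hm Hp (jointMap Γm Γp u)‖ * ‖jointMap Γm Γp v‖ := norm_inner_le_norm _ _
          _ = ‖jointMap Γm Γp u‖ * ‖jointMap Γm Γp v‖ := by rw [norm_flipFst]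
      have h3 : ‖jointMap Γm Γp v‖ ≤ CK * Real.sqrt S := by
        rw [hvdef, ← hnormab]
        exact hCK (a - b)
      calc S ≤ ‖jointMap Γm Γp u‖ * ‖jointMap Γm Γp v‖ := le_trans h1 h2
        _ ≤ ‖jointMap Γm Γp u‖ * (CK * Real.sqrt S) := by
            exact mul_le_mul_of_nonneg_left h3 (norm_nonneg _)
    rcases eq_or_lt_of_le (Real.sqrt_nonneg S) with hsq | hsq
    · rw [← hsq]
      positivity
    · have h4 : Real.sqrt S * Real.sqrt S ≤ (CK * ‖jointMap Γm Γp u‖) * Real.sqrt S := by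
        rw [Real.mul_self_sqrt hS0]
        calc S ≤ ‖jointMap Γm Γp u‖ * (CK * Real.sqrt S) := hbound
          _ = (CK * ‖jointMap Γm Γp u‖) * Real.sqrt S := by ring
      exact le_of_mul_le_mul_right h4 hsq
  -- the combination map
  set Θ : (↥Np × ↥Nm) →ₗ[𝕜] WithLp 2 (Hm × Hp) :=
    ((jointMap Γm Γp).comp (ofG hdense)).comp
      ((Np.subtype.comp (LinearMap.fst 𝕜 ↥Np ↥Nm)) +
        (Nm.subtype.comp (LinearMap.snd 𝕜 ↥Np ↥Nm))) with hΘ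
  have hΘapply : ∀ ab : ↥Np × ↥Nm,
      Θ ab = jointMap Γm Γp (ofG hdense ((ab.1 : ↥(graphSub 𝕜 A₀)) + (ab.2 : _))) :=
    fun ab => rfl
  have hanti : AntilipschitzWith (Real.toNNReal CK) Θ := by
    apply AddMonoidHomClass.antilipschitz_of_bound
    intro ab
    have h1 := hkey (ab.1 : ↥(graphSub 𝕜 A₀)) (ab.2 : _) ab.1.2 ab.2.2
    have hc1 : ‖ab.1‖ = ‖(ab.1 : ↥(graphSub 𝕜 A₀))‖ := rfl
    have hc2 : ‖ab.2‖ = ‖(ab.2 : ↥(graphSub 𝕜 A₀))‖ := rfl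
    have h2 : ‖ab‖ ≤ Real.sqrt (‖(ab.1 : ↥(graphSub 𝕜 A₀))‖ ^ 2 + ‖(ab.2 : _)‖ ^ 2) := by
      rw [Prod.norm_def]
      apply max_le
      · calc ‖ab.1‖ = ‖(ab.1 : ↥(graphSub 𝕜 A₀))‖ := rfl
          _ = Real.sqrt (‖(ab.1 : ↥(graphSub 𝕜 A₀))‖ ^ 2) := (Real.sqrt_sq (norm_nonneg _)).symm
          _ ≤ Real.sqrt (‖(ab.1 : ↥(graphSub 𝕜 A₀))‖ ^ 2 + ‖(ab.2 : ↥(graphSub 𝕜 A₀))‖ ^ 2) :=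
              Real.sqrt_le_sqrt (le_add_of_nonneg_right (sq_nonneg _))
      · calc ‖ab.2‖ = ‖(ab.2 : ↥(graphSub 𝕜 A₀))‖ := rfl
          _ = Real.sqrt (‖(ab.2 : ↥(graphSub 𝕜 A₀))‖ ^ 2) := (Real.sqrt_sq (norm_nonneg _)).symm
          _ ≤ Real.sqrt (‖(ab.1 : ↥(graphSub 𝕜 A₀))‖ ^ 2 + ‖(ab.2 : ↥(graphSub 𝕜 A₀))‖ ^ 2) :=
              Real.sqrt_le_sqrt (le_add_of_nonneg_left (sq_nonneg _))
    calc ‖ab‖ ≤ Real.sqrt (‖(ab.1 : ↥(graphSub 𝕜 A₀))‖ ^ 2 + ‖(ab.2 : _)‖ ^ 2) := h2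
      _ ≤ CK * ‖jointMap Γm Γp (ofG hdense ((ab.1 : ↥(graphSub 𝕜 A₀)) + (ab.2 : _)))‖ := h1
      _ = CK * ‖Θ ab‖ := by rw [hΘapply]
      _ ≤ (Real.toNNReal CK : ℝ) * ‖Θ ab‖ :=
          le_of_eq (by rw [Real.coe_toNNReal CK hCK0])
  have hlip : LipschitzWith (Real.toNNReal (2 * CK)) Θ := by
    apply AddMonoidHomClass.lipschitz_of_bound
    intro ab
    rw [hΘapply]
    calc ‖jointMap Γm Γp (ofG hdense ((ab.1 : ↥(graphSub 𝕜 A₀)) + (ab.2 : _)))‖ ≤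
        CK * ‖((ab.1 : ↥(graphSub 𝕜 A₀)) + (ab.2 : _) : ↥(graphSub 𝕜 A₀))‖ := hCK _
      _ ≤ CK * (‖(ab.1 : ↥(graphSub 𝕜 A₀))‖ + ‖(ab.2 : ↥(graphSub 𝕜 A₀))‖) := by
          exact mul_le_mul_of_nonneg_left (norm_add_le _ _) hCK0
      _ ≤ CK * (‖ab‖ + ‖ab‖) := by
          have h1 : ‖(ab.1 : ↥(graphSub 𝕜 A₀))‖ ≤ ‖ab‖ := norm_fst_le ab
          have h2 : ‖(ab.2 : ↥(graphSub 𝕜 A₀))‖ ≤ ‖ab‖ := norm_snd_le ab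
          have := add_le_add h1 h2
          exact mul_le_mul_of_nonneg_left this hCK0
      _ = 2 * CK * ‖ab‖ := by ring
  have hsurj : Function.Surjective Θ := by
    intro k
    obtain ⟨uu, huu⟩ := jointMap_surjective hq k
    obtain ⟨r, hrR, w, hw, hdecomp⟩ := Submodule.exists_add_mem_mem_orthogonal (K := R) (toG hdense uu)
    obtain ⟨a, ha, b, hb, hab⟩ := hsplit w hw
    refine ⟨(⟨a, ha⟩, ⟨b, hb⟩), ?_⟩
    rw [hΘapply]
    have habr : (a + b : ↥(graphSub 𝕜 A₀)) = toG hdense uu - r := by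
      rw [← hab, hdecomp]; abel
    show jointMap Γm Γp (ofG hdense (a + b)) = k
    rw [habr, map_sub, map_sub, ofG_toG, huu, (hRΓ r).mp hrR, sub_zero]
  haveI : CompleteSpace ↥Np := hNpclosed.completeSpace_coe
  haveI : CompleteSpace ↥Nm := hNmclosed.completeSpace_coe
  have hUC : UniformContinuous Θ := hlip.uniformContinuous
  have hcomp := hanti.isComplete_range hUC
  rw [hsurj.range_eq] at hcomp
  exact completeSpace_iff_isComplete_univ.mpr hcomp

end Complete
end BQAux

section FlipFst2
variable {α β : Type*} [NormedAddCommGroup α] [InnerProductSpace 𝕜 α]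
    [NormedAddCommGroup β] [InnerProductSpace 𝕜 β]

lemma flipFst_flipFst (x : WithLp 2 (α × β)) : flipFst 𝕜 α β (flipFst 𝕜 α β x) = x := by
  apply (WithLp.equiv 2 (α × β)).injective
  apply Prod.ext
  · rw [WithLp.equiv_apply, WithLp.equiv_apply, WithLp.ofLp_fst, WithLp.ofLp_fst, flipFst_fst, flipFst_fst, neg_neg]
  · rfl

lemma flipFst_injective : Function.Injective (flipFst 𝕜 α β) := by
  intro x y h
  have := congrArg (flipFst 𝕜 α β) h
  rwa [flipFst_flipFst, flipFst_flipFst] at this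

end FlipFst2


/-- Characterization of all boundary quadruples: given a boundary quadruple
`(H₋, H₊, Γ₋, Γ₊)` for `A₀` and linear maps `Γ̃₋ : D(A) → H̃₋`, `Γ̃₊ : D(A) → H̃₊` into
Hilbert spaces, `(H̃₋, H̃₊, Γ̃₋, Γ̃₊)` is a boundary quadruple if and only if
(a) `Γ̃₋` and `Γ̃₊` are surjective, and (b) there is a bounded invertible linear operator
`Ψ : H₋ ⊕ H₊ → H̃₋ ⊕ H̃₊` with `Ψ(Γ₋u, Γ₊u) = (Γ̃₋u, Γ̃₊u)` for all `u ∈ D(A)` and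
`Ψ* C̃ Ψ = C` (expressed as `⟪C̃ Ψx, Ψy⟫ = ⟪Cx, y⟫` for all `x, y`), where
`C(x₋, x₊) = (-x₋, x₊)` and `C̃(x̃₋, x̃₊) = (-x̃₋, x̃₊)`. -/
theorem isBoundaryQuadruple_iff_isomorphic {Hm Hp Hm' Hp' : Type*}
    [NormedAddCommGroup Hm] [InnerProductSpace 𝕜 Hm]
    [NormedAddCommGroup Hp] [InnerProductSpace 𝕜 Hp]
    [NormedAddCommGroup Hm'] [InnerProductSpace 𝕜 Hm'] [CompleteSpace Hm']
    [NormedAddCommGroup Hp'] [InnerProductSpace 𝕜 Hp'] [CompleteSpace Hp']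
    (A₀ : V →ₗ.[𝕜] V) (hdense : Dense (A₀.domain : Set V)) (hskew : SkewSymmetric A₀)
    (Γm : ((-A₀).adjoint).domain →ₗ[𝕜] Hm) (Γp : ((-A₀).adjoint).domain →ₗ[𝕜] Hp)
    (hq : IsBoundaryQuadruple (-A₀).adjoint Γm Γp)
    (Γm' : ((-A₀).adjoint).domain →ₗ[𝕜] Hm') (Γp' : ((-A₀).adjoint).domain →ₗ[𝕜] Hp') :
    IsBoundaryQuadruple (-A₀).adjoint Γm' Γp' ↔
      (Function.Surjective Γm' ∧ Function.Surjective Γp') ∧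
        ∃ Ψ : WithLp 2 (Hm × Hp) ≃L[𝕜] WithLp 2 (Hm' × Hp'),
          (∀ u : ((-A₀).adjoint).domain,
              Ψ ((WithLp.linearEquiv 2 𝕜 (Hm × Hp)).symm (Γm u, Γp u)) =
                (WithLp.linearEquiv 2 𝕜 (Hm' × Hp')).symm (Γm' u, Γp' u)) ∧
            ∀ x y : WithLp 2 (Hm × Hp),
              @inner 𝕜 _ _ (flipFst 𝕜 Hm' Hp' (Ψ x)) (Ψ y) =
                @inner 𝕜 _ _ (flipFst 𝕜 Hm Hp x) y := by

  constructor
  · intro hq'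
    refine ⟨⟨hq'.1, hq'.2.1⟩, ?_⟩
    haveI hKc : CompleteSpace (WithLp 2 (Hm × Hp)) :=
      BQAux.completeSpace_of_boundary_quadruple hdense hskew hq
    have hsurjK := BQAux.jointMap_surjective hq
    have hsurjK' := BQAux.jointMap_surjective hq'
    have hker : ∀ u : ((-A₀).adjoint).domain,
        BQAux.jointMap Γm Γp u = 0 → BQAux.jointMap Γm' Γp' u = 0 := fun u h =>
      (BQAux.jointMap_eq_zero_iff hq' u).mpr ((BQAux.jointMap_eq_zero_iff hq u).mp h)
    have hker' : ∀ u : ((-A₀).adjoint).domain,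
        BQAux.jointMap Γm' Γp' u = 0 → BQAux.jointMap Γm Γp u = 0 := fun u h =>
      (BQAux.jointMap_eq_zero_iff hq u).mpr ((BQAux.jointMap_eq_zero_iff hq' u).mp h)
    obtain ⟨σ, hσ⟩ := (BQAux.jointMap Γm Γp).exists_rightInverse_of_surjective
      (LinearMap.range_eq_top.mpr hsurjK)
    have hσ' : ∀ x, BQAux.jointMap Γm Γp (σ x) = x := fun x => by
      have := LinearMap.ext_iff.mp hσ x
      simpa using this
    set Ψ₀ : WithLp 2 (Hm × Hp) →ₗ[𝕜] WithLp 2 (Hm' × Hp') :=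
      (BQAux.jointMap Γm' Γp').comp σ with hΨ₀def
    have hΨ₀ : ∀ u : ((-A₀).adjoint).domain,
        Ψ₀ (BQAux.jointMap Γm Γp u) = BQAux.jointMap Γm' Γp' u := by
      intro u
      have h1 : BQAux.jointMap Γm Γp (σ (BQAux.jointMap Γm Γp u) - u) = 0 := by
        rw [map_sub, hσ', sub_self]
      have h2 := hker _ h1
      rw [map_sub, sub_eq_zero] at h2
      exact h2
    have hinj : Function.Injective Ψ₀ := by
      intro x y hxy
      obtain ⟨u, hu⟩ := hsurjK (x - y)
      have h1 : BQAux.jointMap Γm' Γp' u = 0 := by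
        rw [← hΨ₀ u, hu, map_sub, hxy, sub_self]
      have h2 := hker' u h1
      rw [hu] at h2
      exact sub_eq_zero.mp h2
    have hsurj : Function.Surjective Ψ₀ := by
      intro w
      obtain ⟨u, hu⟩ := hsurjK' w
      exact ⟨BQAux.jointMap Γm Γp u, by rw [hΨ₀ u, hu]⟩
    have hinner : ∀ x y : WithLp 2 (Hm × Hp),
        @inner 𝕜 _ _ (flipFst 𝕜 Hm' Hp' (Ψ₀ x)) (Ψ₀ y) =
          @inner 𝕜 _ _ (flipFst 𝕜 Hm Hp x) y := by
      intro x y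
      obtain ⟨u, hu⟩ := hsurjK x
      obtain ⟨v, hv⟩ := hsurjK y
      rw [← hu, ← hv, hΨ₀ u, hΨ₀ v, ← BQAux.green hq' u v, ← BQAux.green hq u v]
    have hcont : Continuous Ψ₀ := by
      apply LinearMap.continuous_of_seq_closed_graph
      intro un x y hx hy
      have key : ∀ w : WithLp 2 (Hm' × Hp'),
          @inner 𝕜 _ _ (flipFst 𝕜 Hm' Hp' y) w = @inner 𝕜 _ _ (flipFst 𝕜 Hm' Hp' (Ψ₀ x)) w := by
        intro w
        obtain ⟨z, hz⟩ := hsurj w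
        have t1 : Filter.Tendsto (fun n => @inner 𝕜 _ _ (flipFst 𝕜 Hm' Hp' (Ψ₀ (un n))) (Ψ₀ z))
            Filter.atTop (nhds (@inner 𝕜 _ _ (flipFst 𝕜 Hm' Hp' y) (Ψ₀ z))) := by
          have h2 : Filter.Tendsto (fun n =>
              @inner 𝕜 _ _ (Ψ₀ (un n)) (flipFst 𝕜 Hm' Hp' (Ψ₀ z)))
              Filter.atTop (nhds (@inner 𝕜 _ _ y (flipFst 𝕜 Hm' Hp' (Ψ₀ z)))) :=
            hy.inner tendsto_const_nhds
          simp_rw [← inner_flipFst_symm] at h2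
          exact h2
        have t2 : Filter.Tendsto (fun n => @inner 𝕜 _ _ (flipFst 𝕜 Hm' Hp' (Ψ₀ (un n))) (Ψ₀ z))
            Filter.atTop (nhds (@inner 𝕜 _ _ (flipFst 𝕜 Hm' Hp' (Ψ₀ x)) (Ψ₀ z))) := by
          simp_rw [hinner]
          have h2 : Filter.Tendsto (fun n =>
              @inner 𝕜 _ _ (un n) (flipFst 𝕜 Hm Hp z)) Filter.atTop
              (nhds (@inner 𝕜 _ _ x (flipFst 𝕜 Hm Hp z))) :=
            hx.inner tendsto_const_nhds
          simp_rw [← inner_flipFst_symm] at h2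
          exact h2
        rw [← hz]
        exact tendsto_nhds_unique t1 t2
      have h3 : flipFst 𝕜 Hm' Hp' y = flipFst 𝕜 Hm' Hp' (Ψ₀ x) := ext_inner_right 𝕜 key
      exact flipFst_injective h3
    set e : WithLp 2 (Hm × Hp) ≃ₗ[𝕜] WithLp 2 (Hm' × Hp') :=
      LinearEquiv.ofBijective Ψ₀ ⟨hinj, hsurj⟩ with hedef
    have hecoe : ∀ x, e x = Ψ₀ x := fun x => rfl
    refine ⟨e.toContinuousLinearEquivOfContinuous (by rwa [show ⇑e = ⇑Ψ₀ from rfl]), ?_, ?_⟩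
    · intro u
      rw [LinearEquiv.coeFn_toContinuousLinearEquivOfContinuous, hecoe,
        ← BQAux.jointMap_apply Γm Γp u, hΨ₀ u, BQAux.jointMap_apply]
    · intro x y
      rw [LinearEquiv.coeFn_toContinuousLinearEquivOfContinuous, hecoe, hecoe]
      exact hinner x y
  · rintro ⟨⟨hm', hp'⟩, Ψ, hΨ1, hΨ2⟩
    have hjm : ∀ u : ((-A₀).adjoint).domain,
        BQAux.jointMap Γm' Γp' u = Ψ (BQAux.jointMap Γm Γp u) := by
      intro u
      rw [BQAux.jointMap_apply, BQAux.jointMap_apply, hΨ1 u]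
    refine ⟨hm', hp', ?_, ?_⟩
    · intro u v
      have h1 := BQAux.green hq u v
      rw [h1, ← hΨ2 (BQAux.jointMap Γm Γp u) (BQAux.jointMap Γm Γp v), ← hjm u, ← hjm v,
        inner_flipFst_left, BQAux.jointMap_fst, BQAux.jointMap_snd, BQAux.jointMap_fst,
        BQAux.jointMap_snd]
    · apply BQAux.ker_sup_of_surjective_prod
      intro xy
      obtain ⟨u, hu⟩ := BQAux.jointMap_surjective hq (Ψ.symm
        ((WithLp.linearEquiv 2 𝕜 (Hm' × Hp')).symm xy))
      refine ⟨u, ?_⟩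
      have h2 : BQAux.jointMap Γm' Γp' u =
          (WithLp.linearEquiv 2 𝕜 (Hm' × Hp')).symm xy := by
        rw [hjm u, hu, Ψ.apply_symm_apply]
      have h3 := congrArg (WithLp.linearEquiv 2 𝕜 (Hm' × Hp')) h2
      rw [LinearEquiv.apply_symm_apply] at h3
      have h4 : (WithLp.linearEquiv 2 𝕜 (Hm' × Hp')) (BQAux.jointMap Γm' Γp' u) =
          (Γm' u, Γp' u) := rfl
      rw [h4] at h3
      exact h3
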